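/- Let γ(s,t) be a smooth two-parameter family of invertible symmetric real n×n matrices and let D_s ε := ∂_s ε - (1/2)(γ_s γ⁻¹ ε + ε γ⁻¹ γ_s), similarly D_t. Then for any smooth family ε(s,t) of symmetric matrices, the curvature operator satisfies D_s D_t ε - D_t D_s ε = (1/4) γ [[γ⁻¹ γ_t, γ⁻¹ γ_s], γ⁻¹ ε], where [A,B] = AB - BA. -/

import Mathlib

/-!
Write `p = γ⁻¹` and `Γ(p, a, e) = ½ (a p e + e p a)`, so that
`D_s ε = ε_s - Γ(p, γ_s, ε)`. The term `Γ` is trilinear and `p` has derivative `-p γ_s p`,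
so by the product rule the second partials of `γ` and `ε` cancel out of
`D_s D_t ε - D_t D_s ε` (mixed partials commute), leaving
`[Γ_s, Γ_t] ε + Γ(p γ_s p, γ_t, ε) - Γ(p γ_t p, γ_s, ε)` with `Γ_s = Γ(p, γ_s, ·)`.
Expanding, this equals `¼ γ [[p γ_t, p γ_s], p ε]` using only `γ p = 1`.
-/

open Matrix Filter Topology

attribute [local instance] Matrix.normedAddCommGroup Matrix.normedSpace

section MatrixCalculus

variable {𝕜 : Type*} [NontriviallyNormedField 𝕜] {m : Type*} [Fintype m] [DecidableEq m]
  {A B : 𝕜 → Matrix m m 𝕜} {A' B' : Matrix m m 𝕜} {x : 𝕜}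

theorem HasDerivAt.matrix_mul [CompleteSpace 𝕜] (hA : HasDerivAt A A' x)
    (hB : HasDerivAt B B' x) :
    HasDerivAt (fun u => A u * B u) (A' * B x + A x * B') x := by
  rw [add_comm]
  exact (LinearMap.mul 𝕜 (Matrix m m 𝕜)).toContinuousBilinearMap.hasDerivAt_of_bilinear
    (fun _ => hA) (fun _ => hB)

theorem HasDerivAt.matrix_inv (hA : HasDerivAt A A' x) (hx : IsUnit (A x).det) :
    HasDerivAt (fun u => (A u)⁻¹) (-((A x)⁻¹ * A' * (A x)⁻¹)) x := by
  have hcont : ContinuousAt (fun u => (A u)⁻¹) x := by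
    refine (continuousAt_matrix_inv _ ?_).comp hA.continuousAt
    simpa only [Ring.inverse_eq_inv'] using continuousAt_inv₀ hx.ne_zero
  have hunit : ∀ᶠ u in 𝓝[≠] x, IsUnit (A u).det :=
    nhdsWithin_le_nhds <| ((continuous_id.matrix_det.continuousAt.comp
      hA.continuousAt).eventually_ne hx.ne_zero).mono fun _ h => isUnit_iff_ne_zero.mpr h
  refine hasDerivAt_iff_tendsto_slope.2 <| (((hcont.tendsto.mono_left nhdsWithin_le_nhds).mul
    (hasDerivAt_iff_tendsto_slope.1 hA)).mul_const _).neg.congr' ?_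
  filter_upwards [hunit] with u hu
  have hdiff : (A u)⁻¹ * (A u - A x) * (A x)⁻¹ = (A x)⁻¹ - (A u)⁻¹ := by
    rw [mul_sub, sub_mul, nonsing_inv_mul _ hu, mul_assoc, mul_nonsing_inv _ hx, one_mul, mul_one]
  simp only [slope, vsub_eq_sub, mul_smul_comm, smul_mul_assoc, hdiff, ← smul_neg, neg_sub]

end MatrixCalculus

section RougeeConnection

variable {R : Type*} [Ring R] [Algebra ℝ R]

noncomputable def rougeeConnection (p a e : R) : R :=
  (1 / 2 : ℝ) • (a * p * e + e * p * a)

theorem rougeeConnection_neg_left (p a e : R) :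
    rougeeConnection (-p) a e = -rougeeConnection p a e := by
  simp only [rougeeConnection, mul_neg, neg_mul, ← neg_add, smul_neg]

theorem rougeeConnection_sub_right (p a e e' : R) :
    rougeeConnection p a (e - e') = rougeeConnection p a e - rougeeConnection p a e' := by
  simp only [rougeeConnection, mul_sub, sub_mul]
  module

theorem rougeeConnection_curvature {g p : R} (hgp : g * p = 1) (a b e : R) :
    rougeeConnection p b (rougeeConnection p a e) - rougeeConnection p a (rougeeConnection p b e)
      + rougeeConnection (p * b * p) a e - rougeeConnection (p * a * p) b e =
      (1 / 4 : ℝ) • (g * ⁅⁅p * a, p * b⁆, p * e⁆) := by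
  have hg : ∀ y, g * (p * y) = y := fun y => by rw [← mul_assoc, hgp, one_mul]
  simp only [rougeeConnection, Ring.lie_def, mul_add, add_mul, mul_sub, sub_mul, smul_add,
    smul_sub, mul_assoc, smul_mul_assoc, mul_smul_comm, smul_smul, hg]
  module

variable {m : Type*} [Fintype m] [DecidableEq m]

theorem HasDerivAt.rougeeConnection {p a e : ℝ → Matrix m m ℝ} {p' a' e' : Matrix m m ℝ}
    {x : ℝ}
    (hp : HasDerivAt p p' x) (ha : HasDerivAt a a' x) (he : HasDerivAt e e' x) :
    HasDerivAt (fun u => rougeeConnection (p u) (a u) (e u))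
      (rougeeConnection p' (a x) (e x) + rougeeConnection (p x) a' (e x) +
        rougeeConnection (p x) (a x) e') x := by
  refine ((((ha.matrix_mul hp).matrix_mul he).add
    ((he.matrix_mul hp).matrix_mul ha)).const_smul (1 / 2 : ℝ)).congr_deriv ?_
  simp only [_root_.rougeeConnection, add_mul]
  module

end RougeeConnection

theorem rougee_curvature_general (n : ℕ)
    (γ γs γt γst ε εs εt εst DtE DsE DtEs DsEt DsDtE DtDsE :
      ℝ → ℝ → Matrix (Fin n) (Fin n) ℝ)
    (hγinv : ∀ s t, IsUnit (γ s t))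
    -- first partial derivatives of γ, with equal (symmetric) mixed partials
    (hγs : ∀ s t, HasDerivAt (fun u => γ u t) (γs s t) s)
    (hγt : ∀ s t, HasDerivAt (fun v => γ s v) (γt s t) t)
    (hγst : ∀ s t, HasDerivAt (fun v => γs s v) (γst s t) t)
    (hγts : ∀ s t, HasDerivAt (fun u => γt u t) (γst s t) s)
    -- first partial derivatives of ε, with equal (symmetric) mixed partials
    (hεs : ∀ s t, HasDerivAt (fun u => ε u t) (εs s t) s)
    (hεt : ∀ s t, HasDerivAt (fun v => ε s v) (εt s t) t)
    (hεst : ∀ s t, HasDerivAt (fun v => εs s v) (εst s t) t)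
    (hεts : ∀ s t, HasDerivAt (fun u => εt u t) (εst s t) s)
    -- the first covariant derivatives
    (hDtE : ∀ s t, DtE s t =
      εt s t - (1 / 2 : ℝ) • (γt s t * (γ s t)⁻¹ * ε s t + ε s t * (γ s t)⁻¹ * γt s t))
    (hDsE : ∀ s t, DsE s t =
      εs s t - (1 / 2 : ℝ) • (γs s t * (γ s t)⁻¹ * ε s t + ε s t * (γ s t)⁻¹ * γs s t))
    -- their partial derivatives
    (hDtEs : ∀ s t, HasDerivAt (fun u => DtE u t) (DtEs s t) s)
    (hDsEt : ∀ s t, HasDerivAt (fun v => DsE s v) (DsEt s t) t)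
    -- the second covariant derivatives
    (hDsDtE : ∀ s t, DsDtE s t =
      DtEs s t - (1 / 2 : ℝ) • (γs s t * (γ s t)⁻¹ * DtE s t + DtE s t * (γ s t)⁻¹ * γs s t))
    (hDtDsE : ∀ s t, DtDsE s t =
      DsEt s t - (1 / 2 : ℝ) • (γt s t * (γ s t)⁻¹ * DsE s t + DsE s t * (γ s t)⁻¹ * γt s t)) :
    ∀ s t, DsDtE s t - DtDsE s t =
      (1 / 4 : ℝ) • (γ s t *
        ⁅⁅(γ s t)⁻¹ * γt s t, (γ s t)⁻¹ * γs s t⁆, (γ s t)⁻¹ * ε s t⁆) := by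
  intro s t
  have hdet : IsUnit (γ s t).det := (isUnit_iff_isUnit_det _).1 (hγinv s t)
  set p := (γ s t)⁻¹
  have hDtEs' : DtEs s t = εst s t - (rougeeConnection (-(p * γs s t * p)) (γt s t) (ε s t)
      + rougeeConnection p (γst s t) (ε s t) + rougeeConnection p (γt s t) (εs s t)) := by
    refine (hDtEs s t).unique ?_
    rw [show (fun u => DtE u t) = _ from funext fun u => hDtE u t]
    exact (hεts s t).sub (((hγs s t).matrix_inv hdet).rougeeConnection (hγts s t) (hεs s t))
  have hDsEt' : DsEt s t = εst s t - (rougeeConnection (-(p * γt s t * p)) (γs s t) (ε s t)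
      + rougeeConnection p (γst s t) (ε s t) + rougeeConnection p (γs s t) (εt s t)) := by
    refine (hDsEt s t).unique ?_
    rw [show (fun v => DsE s v) = _ from funext fun v => hDsE s v]
    exact (hεst s t).sub (((hγt s t).matrix_inv hdet).rougeeConnection (hγst s t) (hεt s t))
  have hDsDtE' : DsDtE s t = DtEs s t - rougeeConnection p (γs s t) (DtE s t) := hDsDtE s t
  have hDtDsE' : DtDsE s t = DsEt s t - rougeeConnection p (γt s t) (DsE s t) := hDtDsE s t
  have hDtE' : DtE s t = εt s t - rougeeConnection p (γt s t) (ε s t) := hDtE s t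
  have hDsE' : DsE s t = εs s t - rougeeConnection p (γs s t) (ε s t) := hDsE s t
  rw [hDsDtE', hDtDsE', hDtEs', hDsEt', hDtE', hDsE',
    ← rougeeConnection_curvature (mul_nonsing_inv _ hdet)]
  simp only [rougeeConnection_neg_left, rougeeConnection_sub_right]
  abel

/-- Pointwise curvature formula for the Rougée covariant derivative
`D_s ε = ∂_s ε - (1/2)(γ_s γ⁻¹ ε + ε γ⁻¹ γ_s)` on a two-parameter family:
`D_s D_t ε - D_t D_s ε = (1/4) γ [[γ⁻¹ γ_t, γ⁻¹ γ_s], γ⁻¹ ε]`. -/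
theorem rougee_curvature (n : ℕ)
    (γ γs γt γst ε εs εt εst DtE DsE DtEs DsEt DsDtE DtDsE :
      ℝ → ℝ → Matrix (Fin n) (Fin n) ℝ)
    (hγinv : ∀ s t, IsUnit (γ s t))
    (hγsymm : ∀ s t, (γ s t).IsSymm)
    (hεsymm : ∀ s t, (ε s t).IsSymm)
    -- first partial derivatives of γ, with equal (symmetric) mixed partials
    (hγs : ∀ s t, HasDerivAt (fun u => γ u t) (γs s t) s)
    (hγt : ∀ s t, HasDerivAt (fun v => γ s v) (γt s t) t)
    (hγst : ∀ s t, HasDerivAt (fun v => γs s v) (γst s t) t)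
    (hγts : ∀ s t, HasDerivAt (fun u => γt u t) (γst s t) s)
    -- first partial derivatives of ε, with equal (symmetric) mixed partials
    (hεs : ∀ s t, HasDerivAt (fun u => ε u t) (εs s t) s)
    (hεt : ∀ s t, HasDerivAt (fun v => ε s v) (εt s t) t)
    (hεst : ∀ s t, HasDerivAt (fun v => εs s v) (εst s t) t)
    (hεts : ∀ s t, HasDerivAt (fun u => εt u t) (εst s t) s)
    -- the first covariant derivatives
    (hDtE : ∀ s t, DtE s t =
      εt s t - (1 / 2 : ℝ) • (γt s t * (γ s t)⁻¹ * ε s t + ε s t * (γ s t)⁻¹ * γt s t))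
    (hDsE : ∀ s t, DsE s t =
      εs s t - (1 / 2 : ℝ) • (γs s t * (γ s t)⁻¹ * ε s t + ε s t * (γ s t)⁻¹ * γs s t))
    -- their partial derivatives
    (hDtEs : ∀ s t, HasDerivAt (fun u => DtE u t) (DtEs s t) s)
    (hDsEt : ∀ s t, HasDerivAt (fun v => DsE s v) (DsEt s t) t)
    -- the second covariant derivatives
    (hDsDtE : ∀ s t, DsDtE s t =
      DtEs s t - (1 / 2 : ℝ) • (γs s t * (γ s t)⁻¹ * DtE s t + DtE s t * (γ s t)⁻¹ * γs s t))
    (hDtDsE : ∀ s t, DtDsE s t =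
      DsEt s t - (1 / 2 : ℝ) • (γt s t * (γ s t)⁻¹ * DsE s t + DsE s t * (γ s t)⁻¹ * γt s t)) :
    ∀ s t, DsDtE s t - DtDsE s t =
      (1 / 4 : ℝ) • (γ s t *
        ⁅⁅(γ s t)⁻¹ * γt s t, (γ s t)⁻¹ * γs s t⁆, (γ s t)⁻¹ * ε s t⁆) :=
  rougee_curvature_general n γ γs γt γst ε εs εt εst DtE DsE DtEs DsEt DsDtE DtDsE hγinv hγs hγt
    hγst hγts hεs hεt hεst hεts hDtE hDsE hDtEs hDsEt hDsDtE hDtDsE
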